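/- arXiv:2408.10429 — 6 statements merged into one kernel-verified Lean document; each statement's English description precedes it below -/
import Mathlib

section
/- In the satisficing duopoly where seller 2's revenue is R2(p1,p2) = p2*((1/2)(1-p2) + (1/2)max(p1-p2,0)) for prices in [0,1], when p1 = 0.4 the function p2 ↦ R2(0.4, p2) has (at least) two distinct local maxima on [0,1]: one at p2 = 0.35 and one at p2 = 0.5. -/
/-- Seller 2's revenue in the satisficing duopoly. -/
noncomputable def R2 (p1 p2 : ℝ) : ℝ :=
  p2 * ((1 / 2) * (1 - p2) + (1 / 2) * max (p1 - p2) 0)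

/-- When `p1 = 0.4`, seller 2's revenue has two distinct local maxima on `[0,1]`:
one at `0.35` and one at `0.5`. -/
theorem stmt0 :
    IsLocalMaxOn (fun p2 => R2 0.4 p2) (Set.Icc (0 : ℝ) 1) 0.35 ∧
    IsLocalMaxOn (fun p2 => R2 0.4 p2) (Set.Icc (0 : ℝ) 1) 0.5 ∧
    (0.35 : ℝ) ≠ 0.5 := by
  refine ⟨?_, ?_, by norm_num⟩
  · have h : Set.Ioo (0.3 : ℝ) 0.4 ∈ nhdsWithin (0.35 : ℝ) (Set.Icc (0:ℝ) 1) :=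
      nhdsWithin_le_nhds (Ioo_mem_nhds (by norm_num) (by norm_num))
    filter_upwards [h] with x hx
    simp only [R2]
    rw [max_eq_left (by linarith [hx.2] : (0:ℝ) ≤ 0.4 - x),
        max_eq_left (by norm_num : (0:ℝ) ≤ 0.4 - 0.35)]
    nlinarith [sq_nonneg (x - 0.35)]
  · have h : Set.Ioo (0.4 : ℝ) 0.6 ∈ nhdsWithin (0.5 : ℝ) (Set.Icc (0:ℝ) 1) :=
      nhdsWithin_le_nhds (Ioo_mem_nhds (by norm_num) (by norm_num))
    filter_upwards [h] with x hx
    simp only [R2]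
    rw [max_eq_right (by linarith [hx.1] : (0.4:ℝ) - x ≤ 0),
        max_eq_right (by norm_num : (0.4:ℝ) - 0.5 ≤ 0)]
    nlinarith [sq_nonneg (x - 0.5)]
end

section
/- In the BICA model with distinct qualities, for any price vector aligned with the quality ordering, each seller's undercutting first-order condition p = (F̄(p) - F̄(q))/f(p) (where q is the next-higher-ranked seller's price) has a unique solution in (0,q), provided F has a monotone hazard rate and F̄(p) - F̄(q) > 0 on (0,q). -/
/-- In the BICA model, the undercutting first-order condition
`p * f p = F̄(p) - F̄(q)` (where `q` is the next-higher-ranked seller's price, `F` is the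
willingness-to-pay CDF with density `f`, and `F̄ = 1 - F`) has a unique solution in
`(0, q)`, provided `F` has a monotone hazard rate and `F̄(p) - F̄(q) > 0` on `(0, q)`. -/
theorem stmt8 (vbar q : ℝ) (F f : ℝ → ℝ)
    (hq : q ∈ Set.Ioc (0 : ℝ) vbar)
    (hFderiv : ∀ p ∈ Set.Icc (0 : ℝ) q, HasDerivAt F (f p) p)
    (hf_cont : ContinuousOn f (Set.Icc (0 : ℝ) q))
    (hf_pos : ∀ p ∈ Set.Icc (0 : ℝ) q, 0 < f p)
    (hsurv_pos : ∀ p ∈ Set.Icc (0 : ℝ) q, 0 < 1 - F p)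
    (hMHR : MonotoneOn (fun p => f p / (1 - F p)) (Set.Icc (0 : ℝ) q))
    (hsurv : ∀ p ∈ Set.Ioo (0 : ℝ) q, 0 < (1 - F p) - (1 - F q)) :
    ∃! p : ℝ, p ∈ Set.Ioo (0 : ℝ) q ∧ p * f p = (1 - F p) - (1 - F q) := by
  obtain ⟨hq0, hqv⟩ := hq
  have hFcont : ContinuousOn F (Set.Icc 0 q) := fun x hx =>
    (hFderiv x hx).continuousAt.continuousWithinAt
  have hFmono : StrictMonoOn F (Set.Icc 0 q) := by
    apply StrictMonoOn.mono (s := Set.Icc 0 q) ?_ le_rfl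
    apply strictMonoOn_of_deriv_pos (convex_Icc 0 q) hFcont
    intro x hx
    rw [interior_Icc] at hx
    rw [(hFderiv x (Set.mem_Icc_of_Ioo hx)).deriv]
    exact hf_pos x (Set.mem_Icc_of_Ioo hx)
  -- existence via IVT
  set g : ℝ → ℝ := fun x => x * f x - ((1 - F x) - (1 - F q)) with hg
  have hgcont : ContinuousOn g (Set.Icc 0 q) := by
    apply ContinuousOn.sub
    · exact (continuousOn_id).mul hf_cont
    · exact ((continuousOn_const.sub hFcont)).sub continuousOn_const
  have hg0 : g 0 < 0 := by
    have : F 0 < F q := hFmono (Set.left_mem_Icc.2 hq0.le) (Set.right_mem_Icc.2 hq0.le) hq0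
    simp only [hg, zero_mul]
    linarith
  have hgq : 0 < g q := by
    have := hf_pos q (Set.right_mem_Icc.2 hq0.le)
    simp only [hg]
    nlinarith
  obtain ⟨p, hp, hgp⟩ := intermediate_value_Ioo hq0.le hgcont (Set.mem_Ioo.2 ⟨hg0, hgq⟩)
  have hsol : p * f p = (1 - F p) - (1 - F q) := by
    simp only [hg] at hgp; linarith
  -- uniqueness
  have key : ∀ a b : ℝ, a ∈ Set.Ioo (0:ℝ) q → b ∈ Set.Ioo (0:ℝ) q → a < b →
      a * f a = (1 - F a) - (1 - F q) → b * f b = (1 - F b) - (1 - F q) → False := by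
    intro a b ha hb hab hA hB
    have ha' : a ∈ Set.Icc (0:ℝ) q := Set.mem_Icc_of_Ioo ha
    have hb' : b ∈ Set.Icc (0:ℝ) q := Set.mem_Icc_of_Ioo hb
    have hsa : 0 < 1 - F a := hsurv_pos a ha'
    have hsb : 0 < 1 - F b := hsurv_pos b hb'
    have hsq : 0 < 1 - F q := hsurv_pos q (Set.right_mem_Icc.2 hq0.le)
    have hFab : F a < F b := hFmono ha' hb' hab
    have hfa : 0 < f a := hf_pos a ha'
    have hfb : 0 < f b := hf_pos b hb'
    -- hazard form of FOC
    have hAz : a * (f a / (1 - F a)) = 1 - (1 - F q) / (1 - F a) := by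
      field_simp
      linarith
    have hBz : b * (f b / (1 - F b)) = 1 - (1 - F q) / (1 - F b) := by
      field_simp
      linarith
    have hmhr : f a / (1 - F a) ≤ f b / (1 - F b) := hMHR ha' hb' hab.le
    have h1 : a * (f a / (1 - F a)) < b * (f b / (1 - F b)) := by
      have hpos : 0 < f a / (1 - F a) := div_pos hfa hsa
      calc a * (f a / (1 - F a)) < b * (f a / (1 - F a)) := by
            exact mul_lt_mul_of_pos_right hab hpos
        _ ≤ b * (f b / (1 - F b)) := by
            exact mul_le_mul_of_nonneg_left hmhr (le_of_lt (ha.1.trans hab))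
    have h2 : (1 - F q) / (1 - F a) < (1 - F q) / (1 - F b) := by
      apply div_lt_div_of_pos_left hsq hsb
      linarith
    rw [hAz, hBz] at h1
    linarith
  refine ⟨p, ⟨hp, hsol⟩, ?_⟩
  rintro y ⟨hy, hysol⟩
  rcases lt_trichotomy y p with h | h | h
  · exact absurd (key y p hy hp h hysol hsol) (by simp)
  · exact h
  · exact absurd (key p y hp hy h hsol hysol) (by simp)
end

section
/- In the BICA model, for any two sellers i, j with qualities q_i > q_j and any price configuration with p_i > p_j where no higher-quality seller prices weakly below p_i, the difference of own-price revenue gradients satisfies g_i(p_i, p_j=0, p_{-{i,j}}) - lim_{p_j↑p_i} g_j(p_i, p_j, p_{-{i,j}}) = P(p_i ≤ w < min over k with q_k > q_i of p_k) ≥ 0; in particular seller i weakly gradient-dominates seller j. -/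
open Filter Topology

/-- The lowest price among the sellers of strictly higher quality than `i`
(taken to be `vbar` if there is none). -/
noncomputable def minHigher {N : ℕ} (qual : Fin N → ℝ) (vbar : ℝ)
    (i : Fin N) (p : Fin N → ℝ) : ℝ :=
  sInf (insert vbar {x | ∃ k, qual i < qual k ∧ p k = x})

/-- Seller `i`'s own-price revenue gradient under BICA choice:
`g_i(p) = P(p_i ≤ w < min_{k : q_k > q_i} p_k) - p_i f(p_i)`, where the
willingness-to-pay `w` has CDF `F` and density `f`. -/
noncomputable def gBICA {N : ℕ} (qual : Fin N → ℝ) (vbar : ℝ)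
    (F f : ℝ → ℝ) (i : Fin N) (p : Fin N → ℝ) : ℝ :=
  (F (minHigher qual vbar i p) - F (p i)) - p i * f (p i)

/-- In the BICA model (distinct qualities, `q_i > q_j`, `p_i > p_j`, and no seller of
quality above `q_j` pricing weakly below `p_i` other than `i` itself, which prices at
`p_i`): the difference between seller `i`'s gradient at `p_j = 0` and the left-limit of
seller `j`'s gradient as `p_j ↑ p_i` equals `P(p_i ≤ w < min_{k : q_k > q_i} p_k) ≥ 0`;
in particular, seller `i` weakly gradient-dominates seller `j`. -/
theorem stmt9 {N : ℕ} (qual : Fin N → ℝ) (vbar : ℝ) (F f : ℝ → ℝ)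
    (hqual : Function.Injective qual)
    (hFmono : Monotone F)
    (hFcont : Continuous F)
    (i j : Fin N) (p : Fin N → ℝ)
    (hfcont : ContinuousAt f (p i))
    (hq : qual j < qual i)
    (hpj : p j < p i) (hvb : p i ≤ vbar)
    (hhi : ∀ k, qual i < qual k → p i < p k)
    (hmid : ∀ k, k ≠ j → qual j < qual k → p i ≤ p k)
    (L : ℝ)
    (hL : Tendsto (fun r => gBICA qual vbar F f j (Function.update p j r))
        (nhdsWithin (p i) (Set.Iio (p i))) (nhds L)) :
    gBICA qual vbar F f i (Function.update p j 0) - L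
        = F (minHigher qual vbar i p) - F (p i) ∧
      0 ≤ F (minHigher qual vbar i p) - F (p i) := by
  have hij : i ≠ j := fun h => absurd hq (by rw [h]; exact lt_irrefl _)
  -- minHigher for i is unaffected by updating coordinate j
  have hset : {x | ∃ k, qual i < qual k ∧ Function.update p j 0 k = x}
      = {x | ∃ k, qual i < qual k ∧ p k = x} := by
    ext x
    constructor
    · rintro ⟨k, hk, hkx⟩
      have hkj : k ≠ j := fun h => absurd (hq.trans hk) (by rw [h]; exact lt_irrefl _)
      exact ⟨k, hk, by rwa [Function.update_of_ne hkj] at hkx⟩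
    · rintro ⟨k, hk, hkx⟩
      have hkj : k ≠ j := fun h => absurd (hq.trans hk) (by rw [h]; exact lt_irrefl _)
      exact ⟨k, hk, by rwa [Function.update_of_ne hkj]⟩
  have hmin_i : minHigher qual vbar i (Function.update p j 0) = minHigher qual vbar i p := by
    unfold minHigher; rw [hset]
  -- minHigher for j at any update equals p i
  have hmin_j : ∀ r : ℝ, minHigher qual vbar j (Function.update p j r) = p i := by
    intro r
    unfold minHigher
    apply le_antisymm
    · apply csInf_le
      · refine ⟨p i, ?_⟩
        rintro x (rfl | ⟨k, hk, rfl⟩)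
        · exact hvb
        · have hkj : k ≠ j := fun h => absurd hk (by rw [h]; exact lt_irrefl _)
          rw [Function.update_of_ne hkj]
          exact hmid k hkj hk
      · exact Or.inr ⟨i, hq, Function.update_of_ne hij _ _⟩
    · apply le_csInf ⟨vbar, Or.inl rfl⟩
      rintro x (rfl | ⟨k, hk, rfl⟩)
      · exact hvb
      · have hkj : k ≠ j := fun h => absurd hk (by rw [h]; exact lt_irrefl _)
        rw [Function.update_of_ne hkj]
        exact hmid k hkj hk
  -- identify L
  have hL' : Tendsto (fun r : ℝ => (F (p i) - F r) - r * f r)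
      (nhdsWithin (p i) (Set.Iio (p i))) (nhds ((F (p i) - F (p i)) - p i * f (p i))) := by
    apply Tendsto.mono_left _ nhdsWithin_le_nhds
    exact (tendsto_const_nhds.sub (hFcont.tendsto (p i))).sub
      ((Continuous.tendsto continuous_id (p i)).mul hfcont)
  have heq : (fun r : ℝ => gBICA qual vbar F f j (Function.update p j r))
      = fun r : ℝ => (F (p i) - F r) - r * f r := by
    funext r
    unfold gBICA
    rw [hmin_j r, Function.update_self]
  rw [heq] at hL
  have hLval : L = (F (p i) - F (p i)) - p i * f (p i) :=
    tendsto_nhds_unique hL hL'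
  -- nonnegativity
  have hple : p i ≤ minHigher qual vbar i p := by
    apply le_csInf ⟨vbar, Or.inl rfl⟩
    rintro x (rfl | ⟨k, hk, rfl⟩)
    · exact hvb
    · exact (hhi k hk).le
  refine ⟨?_, sub_nonneg.mpr (hFmono hple)⟩
  unfold gBICA
  rw [hmin_i, hLval, Function.update_of_ne hij]
  ring
end

section
/- Under CLC choice, any local Nash equilibrium with pairwise distinct prices is a valid order-price pair: if p is an LNE with p_{π(1)} > p_{π(2)} > ... > p_{π(N)} for the induced ordering π, then for each rank l, p_{π(l)} is a local maximum of p ↦ R_{π(l)}(p, p_{-π(l)}^{S_l}) on [0, p_{π(l-1)}], where S_l = {π(1),...,π(l-1)} and p^{S_l} sets all prices outside S_l to 0. -/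
/-- The price vector in which sellers of rank strictly less than `l` (under `π`)
keep their prices from `p` and all others price at `0` (the set `S_l` of
higher-ranked sellers). -/
def higherVec {N : ℕ} (π : Equiv.Perm (Fin N)) (p : Fin N → ℝ) (l : Fin N) :
    Fin N → ℝ :=
  fun k => if ((π.symm k : Fin N) : ℕ) < (l : ℕ) then p k else 0

/-- The upper end of the undercutting interval of the seller of rank `l`. -/
noncomputable def ubOf {N : ℕ} (vbar : ℝ) (π : Equiv.Perm (Fin N))
    (p : Fin N → ℝ) (l : Fin N) : ℝ :=
  if (l : ℕ) = 0 then vbar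
  else p (π ⟨(l : ℕ) - 1, Nat.lt_of_le_of_lt (Nat.sub_le _ _) l.isLt⟩)

/-- Under the pseudo-competitive property, any local Nash equilibrium with pairwise
distinct prices is a valid order-price pair: for each rank `l`, `p (π l)` is a local
maximum of the undercutting revenue curve `q ↦ R (π l) (update (higherVec l) (π l) q)`
on `[0, p (π (l-1))]` (on `[0, v̄]` for the top rank). -/
theorem stmt12 {N : ℕ} (vbar : ℝ) (hvbar : 0 < vbar)
    (R : Fin N → (Fin N → ℝ) → ℝ)
    -- pseudo-competitive property
    (hPC : ∀ (i : Fin N) (p p' : Fin N → ℝ),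
      {k | p i ≤ p k} = {k | p i ≤ p' k} →
      (∀ k, p i ≤ p k → p' k = p k) →
      R i p = R i p')
    (π : Equiv.Perm (Fin N)) (p : Fin N → ℝ)
    (hdom : ∀ i, p i ∈ Set.Icc (0 : ℝ) vbar)
    -- prices are pairwise distinct, strictly decreasing in rank
    (halign : ∀ l m : Fin N, l < m → p (π m) < p (π l))
    -- p is a local Nash equilibrium
    (hLNE : ∀ i : Fin N,
      IsLocalMaxOn (fun q => R i (Function.update p i q))
        (Set.Icc (0 : ℝ) vbar) (p i)) :
    ∀ l : Fin N,
      IsLocalMaxOn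
        (fun q => R (π l) (Function.update (higherVec π p l) (π l) q))
        (Set.Icc (0 : ℝ) (ubOf vbar π p l)) (p (π l)) := by
  intro l
  -- key equality: for q above all lower-ranked prices, the two revenue values agree
  have key : ∀ q : ℝ, (∀ k : Fin N, (l : ℕ) < ((π.symm k : Fin N) : ℕ) → p k < q) →
      R (π l) (Function.update (higherVec π p l) (π l) q)
        = R (π l) (Function.update p (π l) q) := by
    intro q hq
    refine (hPC (π l) (Function.update p (π l) q)
      (Function.update (higherVec π p l) (π l) q) ?_ ?_).symm
    · ext k
      simp only [Set.mem_setOf_eq, Function.update_self]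
      by_cases hk : k = π l
      · subst hk; simp
      · rw [Function.update_of_ne hk, Function.update_of_ne hk, higherVec]
        by_cases hlt : ((π.symm k : Fin N) : ℕ) < (l : ℕ)
        · simp [hlt]
        · have hne : ((π.symm k : Fin N) : ℕ) ≠ (l : ℕ) := by
            intro h
            exact hk (by rw [← Equiv.apply_symm_apply π k, Fin.ext h])
          have hgt : (l : ℕ) < ((π.symm k : Fin N) : ℕ) :=
            lt_of_le_of_ne (not_lt.1 hlt) (Ne.symm hne)
          have h1 : p k < q := hq k hgt
          have h0 : (0:ℝ) < q := lt_of_le_of_lt (hdom k).1 h1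
          rw [if_neg hlt]
          exact iff_of_false (not_le.2 h1) (not_le.2 h0)
    · intro k hk
      by_cases hke : k = π l
      · subst hke; simp
      · rw [Function.update_of_ne hke] at hk ⊢
        rw [Function.update_self] at hk
        have hlt : ((π.symm k : Fin N) : ℕ) < (l : ℕ) := by
          by_contra hlt
          have hne : ((π.symm k : Fin N) : ℕ) ≠ (l : ℕ) := by
            intro h
            exact hke (by rw [← Equiv.apply_symm_apply π k, Fin.ext h])
          have hgt : (l : ℕ) < ((π.symm k : Fin N) : ℕ) :=
            lt_of_le_of_ne (not_lt.1 hlt) (Ne.symm hne)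
          exact absurd hk (not_le.2 (hq k hgt))
        rw [Function.update_of_ne hke]
        simp [higherVec, hlt]
  -- the undercutting interval sits inside [0, vbar]
  have hub : ubOf vbar π p l ≤ vbar := by
    rw [ubOf]
    split
    · exact le_refl _
    · exact (hdom _).2
  have hbase : IsLocalMaxOn (fun q => R (π l) (Function.update p (π l) q))
      (Set.Icc (0 : ℝ) (ubOf vbar π p l)) (p (π l)) :=
    (hLNE (π l)).on_subset (Set.Icc_subset_Icc_right hub)
  -- the condition of `key` holds eventually near `p (π l)`
  have hEv : ∀ᶠ q in nhdsWithin (p (π l)) (Set.Icc (0 : ℝ) (ubOf vbar π p l)),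
      ∀ k : Fin N, (l : ℕ) < ((π.symm k : Fin N) : ℕ) → p k < q := by
    have hev0 : ∀ᶠ q in nhds (p (π l)),
        ∀ k : Fin N, (l : ℕ) < ((π.symm k : Fin N) : ℕ) → p k < q := by
      rw [Filter.eventually_all]
      intro k
      by_cases hgt : (l : ℕ) < ((π.symm k : Fin N) : ℕ)
      · have hpk : p k < p (π l) := by
          have := halign l (π.symm k) hgt
          rwa [Equiv.apply_symm_apply] at this
        filter_upwards [eventually_gt_nhds hpk] with q hq _
        exact hq
      · exact Filter.Eventually.of_forall fun q h => absurd h hgt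
    exact nhdsWithin_le_nhds hev0
  have ha : ∀ k : Fin N, (l : ℕ) < ((π.symm k : Fin N) : ℕ) → p k < p (π l) := by
    intro k hgt
    have := halign l (π.symm k) hgt
    rwa [Equiv.apply_symm_apply] at this
  filter_upwards [hEv, hbase] with q hq hle
  simp only [key q hq, key (p (π l)) ha]
  exact hle
end

section
/- Gradient ascent distance recursion: suppose a sequence p_t in ℝ evolves as p_{t+1} = p_t + η_t g(p_t, x_t), where |g| ≤ G, and suppose there exist ε > 0, K > 0 and a target p* such that whenever (p* - p_t)^2 ≥ ε, one has g(p_t, x_t)(p* - p_t) ≥ Kε/2. If η_t > 0, Σ η_t = ∞, Σ η_t² < ∞, then for every ε > 0 there exists T such that (p* - p_t)^2 < 2ε for all t ≥ T; hence p_t → p*. -/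
open Filter Topology

/-! The squared distance `d t = (p* - p t)²` obeys
`d (t+1) = d t - 2 η t γ t (p* - p t) + (η t γ t)²`. Once the steps are small, the drift
condition makes `d` drop by at least `η t K ε / 2` while `d ≥ ε`; since `∑ η t = ∞` this
cannot last forever, so `d` enters `[0, ε)`. A small step taken from inside `[0, ε)` lands
below `2ε`, and from `[ε, 2ε)` the sequence only decreases, so `d` never leaves `[0, 2ε)`. -/

lemma tendsto_zero_of_tendsto_sq {α : Type*} {l : Filter α} {u : α → ℝ}
    (h : Tendsto (fun x => u x ^ 2) l (𝓝 0)) : Tendsto u l (𝓝 0) := by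
  rw [tendsto_zero_iff_abs_tendsto_zero]
  simpa [Function.comp_def, Real.sqrt_sq_eq_abs] using h.sqrt

section Descent

variable {d b : ℕ → ℝ} {ε : ℝ}

/-- The potential `d n + ∑_{t<n} b t` is nonincreasing while `d ≥ ε`, and it would stay
bounded although its second summand tends to `∞`. -/
lemma frequently_lt_of_descent (hd : ∀ t, 0 ≤ d t)
    (hb : Tendsto (fun n => ∑ t ∈ Finset.range n, b t) atTop atTop)
    (hdesc : ∀ᶠ t in atTop, ε ≤ d t → d (t + 1) ≤ d t - b t) :
    ∃ᶠ t in atTop, d t < ε := by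
  intro hge
  simp only [not_lt] at hge
  obtain ⟨T, hT⟩ := eventually_atTop.1 (hdesc.and hge)
  have hpot : ∀ n ≥ T, d n + ∑ t ∈ Finset.range n, b t ≤ d T + ∑ t ∈ Finset.range T, b t := by
    intro n hn
    induction n, hn using Nat.le_induction with
    | base => exact le_rfl
    | succ n hn ih =>
      have := (hT n hn).1 (hT n hn).2
      rw [Finset.sum_range_succ]
      linarith
  obtain ⟨n, hn, hbig⟩ :=
    ((eventually_ge_atTop T).and (hb.eventually_gt_atTop (d T + ∑ t ∈ Finset.range T, b t))).exists
  linarith [hpot n hn, hd n]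

lemma eventually_lt_of_descent {M : ℝ} (hd : ∀ t, 0 ≤ d t) (hb_nonneg : ∀ t, 0 ≤ b t)
    (hb : Tendsto (fun n => ∑ t ∈ Finset.range n, b t) atTop atTop)
    (hdesc : ∀ᶠ t in atTop, ε ≤ d t → d (t + 1) ≤ d t - b t)
    (hjump : ∀ᶠ t in atTop, d t < ε → d (t + 1) < M) :
    ∀ᶠ t in atTop, d t < M := by
  obtain ⟨T, hT⟩ := eventually_atTop.1 (hdesc.and hjump)
  obtain ⟨t₀, ht₀, hlt⟩ := (frequently_atTop.1 (frequently_lt_of_descent hd hb hdesc)) T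
  refine eventually_atTop.2 ⟨t₀ + 1, fun t ht => ?_⟩
  induction t, ht using Nat.le_induction with
  | base => exact (hT t₀ ht₀).2 hlt
  | succ t ht ih =>
    by_cases hε : d t < ε
    · exact (hT t (by omega)).2 hε
    · linarith [(hT t (by omega)).1 (not_lt.1 hε), hb_nonneg t]

end Descent

section GradientStep

variable {a γ η G : ℝ}

lemma sq_sub_mul_le_of_drift {c : ℝ} (hη : 0 ≤ η) (hγ : |γ| ≤ G) (hstep : η * G ^ 2 ≤ c)
    (hdrift : c ≤ γ * a) : (a - η * γ) ^ 2 ≤ a ^ 2 - η * c := by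
  have hγG : γ ^ 2 ≤ G ^ 2 := sq_le_sq' (abs_le.1 hγ).1 (abs_le.1 hγ).2
  nlinarith [mul_le_mul_of_nonneg_left hγG (mul_nonneg hη hη),
    mul_le_mul_of_nonneg_left hstep hη, mul_le_mul_of_nonneg_left hdrift hη]

lemma sq_sub_mul_lt_of_small {ε : ℝ} (ha : a ^ 2 < ε) (hγ : |γ| ≤ G)
    (hstep : 6 * (η * G) ^ 2 ≤ ε) : (a - η * γ) ^ 2 < 2 * ε := by
  have hγG : (η * γ) ^ 2 ≤ (η * G) ^ 2 := by
    rw [mul_pow, mul_pow]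
    exact mul_le_mul_of_nonneg_left (sq_le_sq' (abs_le.1 hγ).1 (abs_le.1 hγ).2) (sq_nonneg η)
  -- `(a - h)² ≤ (3/2) a² + 3 h²`
  nlinarith [sq_nonneg (a + 2 * (η * γ))]

end GradientStep

/-- Gradient-ascent distance recursion: a sequence `p` updated by
`p (t+1) = p t + η t * γ t` with bounded "gradients" `γ`, positive non-summable but
square-summable stepsizes, and a drift condition towards `pstar`, satisfies
`(pstar - p t)² < 2ε` eventually for every `ε > 0`; hence `p t → pstar`. -/
theorem stmt15 (p γ η : ℕ → ℝ) (G K pstar : ℝ)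
    (hG : ∀ t, |γ t| ≤ G) (hK : 0 < K)
    (hupd : ∀ t, p (t + 1) = p t + η t * γ t)
    (hη_pos : ∀ t, 0 < η t)
    (hη_div : Tendsto (fun T => ∑ t ∈ Finset.range T, η t) atTop atTop)
    (hη_sq : Summable fun t => (η t) ^ 2)
    (hdrift : ∀ ε > (0 : ℝ), ∃ T₀ : ℕ, ∀ t ≥ T₀,
      ε ≤ (pstar - p t) ^ 2 → K * ε / 2 ≤ γ t * (pstar - p t)) :
    (∀ ε > (0 : ℝ), ∃ T : ℕ, ∀ t ≥ T, (pstar - p t) ^ 2 < 2 * ε) ∧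
    Tendsto p atTop (𝓝 pstar) := by
  have hstep : ∀ t, pstar - p (t + 1) = pstar - p t - η t * γ t := fun t => by
    rw [hupd]; ring
  have hη_sq0 : Tendsto (fun t => η t ^ 2) atTop (𝓝 0) := hη_sq.tendsto_atTop_zero
  have hη0 : Tendsto η atTop (𝓝 0) := tendsto_zero_of_tendsto_sq hη_sq0
  have hclose : ∀ ε > (0 : ℝ), ∀ᶠ t in atTop, (pstar - p t) ^ 2 < 2 * ε := by
    intro ε hε
    obtain ⟨T₀, hT₀⟩ := hdrift ε hε
    have hsum : Tendsto (fun n => ∑ t ∈ Finset.range n, K * ε / 2 * η t) atTop atTop := by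
      simpa only [← Finset.mul_sum] using hη_div.const_mul_atTop (by positivity : 0 < K * ε / 2)
    have hsmall : ∀ᶠ t in atTop, η t * G ^ 2 < K * ε / 2 := by
      simpa using (hη0.mul_const (G ^ 2)).eventually (gt_mem_nhds (by rw [zero_mul]; positivity))
    have htiny : ∀ᶠ t in atTop, 6 * (η t * G) ^ 2 < ε := by
      simpa [mul_pow] using ((hη_sq0.mul_const (G ^ 2)).const_mul 6).eventually
        (gt_mem_nhds (by simpa using hε))
    refine eventually_lt_of_descent (ε := ε) (fun t => sq_nonneg _)
      (fun t => (mul_pos (by positivity) (hη_pos t)).le) hsum ?_ ?_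
    · filter_upwards [eventually_ge_atTop T₀, hsmall] with t ht hηt hd
      rw [hstep, mul_comm (K * ε / 2)]
      exact sq_sub_mul_le_of_drift (hη_pos t).le (hG t) hηt.le (hT₀ t ht hd)
    · filter_upwards [htiny] with t hηt hd
      rw [hstep]
      exact sq_sub_mul_lt_of_small hd (hG t) hηt.le
  refine ⟨fun ε hε => eventually_atTop.1 (hclose ε hε), ?_⟩
  have hsq : Tendsto (fun t => (p t - pstar) ^ 2) atTop (𝓝 0) := by
    refine tendsto_order.2 ⟨fun c hc => Eventually.of_forall fun t => hc.trans_le (sq_nonneg _),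
      fun c hc => ?_⟩
    filter_upwards [hclose (c / 2) (half_pos hc)] with t ht
    rw [sub_sq_comm]
    linarith
  exact tendsto_sub_nhds_zero_iff.1 (tendsto_zero_of_tendsto_sq hsq)
end

section
/- For an MHR distribution on [0, v̄] with continuous density f > 0 and c > 0 a constant with c < F̄(0) = 1, the equation F̄(p) - c = p f(p) has exactly one solution in the open interval (0, F̄^{-1}(c)). -/
/-- For an MHR distribution with continuous positive density `f` and survival
function `F̄ = 1 - F` with `F̄ 0 = 1`, and a constant `0 < c < 1` with
`F̄ q = c` for `q ∈ (0, v̄)`, the equation `F̄(p) - c = p f(p)` has exactly one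
solution in the open interval `(0, q) = (0, F̄⁻¹(c))`. -/
theorem stmt18 (vbar c q : ℝ) (F f : ℝ → ℝ)
    (hvbar : 0 < vbar)
    (hc : c ∈ Set.Ioo (0 : ℝ) 1)
    (hq : q ∈ Set.Ioo (0 : ℝ) vbar)
    (hqc : 1 - F q = c)
    (hF0 : F 0 = 0)
    (hFderiv : ∀ p ∈ Set.Icc (0 : ℝ) vbar, HasDerivAt F (f p) p)
    (hf_cont : ContinuousOn f (Set.Icc (0 : ℝ) vbar))
    (hf_pos : ∀ p ∈ Set.Icc (0 : ℝ) vbar, 0 < f p)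
    (hsurv_pos : ∀ p ∈ Set.Ico (0 : ℝ) vbar, 0 < 1 - F p)
    (hMHR : MonotoneOn (fun p => f p / (1 - F p)) (Set.Ico (0 : ℝ) vbar)) :
    ∃! p : ℝ, p ∈ Set.Ioo (0 : ℝ) q ∧ (1 - F p) - c = p * f p := by
  obtain ⟨hq0, hqv⟩ := hq
  obtain ⟨hc0, hc1⟩ := hc
  have hFcont : ContinuousOn F (Set.Icc (0 : ℝ) vbar) := fun x hx =>
    (hFderiv x hx).continuousAt.continuousWithinAt
  -- F is strictly monotone on [0, vbar]
  have hFmono : StrictMonoOn F (Set.Icc (0 : ℝ) vbar) := by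
    apply strictMonoOn_of_deriv_pos (convex_Icc 0 vbar) hFcont
    intro x hx
    rw [interior_Icc] at hx
    rw [(hFderiv x ⟨le_of_lt hx.1, le_of_lt hx.2⟩).deriv]
    exact hf_pos x ⟨le_of_lt hx.1, le_of_lt hx.2⟩
  -- Existence via IVT
  have hgc : ContinuousOn (fun p => (1 - F p) - c - p * f p) (Set.Icc 0 q) := by
    have hsub : Set.Icc (0 : ℝ) q ⊆ Set.Icc 0 vbar :=
      Set.Icc_subset_Icc le_rfl (le_of_lt hqv)
    exact ((continuousOn_const.sub (hFcont.mono hsub)).sub continuousOn_const).sub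
      (continuousOn_id.mul (hf_cont.mono hsub))
  have hg0 : (0 : ℝ) < (1 - F 0) - c - 0 * f 0 := by
    rw [hF0]; ring_nf; linarith
  have hgq : (1 - F q) - c - q * f q < 0 := by
    rw [hqc]
    have := hf_pos q ⟨le_of_lt hq0, le_of_lt hqv⟩
    nlinarith
  have hex : ∃ p ∈ Set.Ioo (0 : ℝ) q, (1 - F p) - c - p * f p = 0 := by
    have := intermediate_value_Ioo' (le_of_lt hq0) hgc
      (Set.mem_Ioo.mpr ⟨hgq, hg0⟩)
    obtain ⟨p, hp, hp0⟩ := this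
    exact ⟨p, hp, hp0⟩
  obtain ⟨p, hp, hpeq⟩ := hex
  refine ⟨p, ⟨hp, by linarith⟩, ?_⟩
  -- Uniqueness
  have key : ∀ p1 p2 : ℝ, p1 ∈ Set.Ioo (0 : ℝ) q → p2 ∈ Set.Ioo (0 : ℝ) q →
      (1 - F p1) - c = p1 * f p1 → (1 - F p2) - c = p2 * f p2 → p1 < p2 → False := by
    intro p1 p2 h1 h2 e1 e2 hlt
    have m1 : p1 ∈ Set.Ico (0 : ℝ) vbar := ⟨le_of_lt h1.1, lt_trans h1.2 hqv⟩
    have m2 : p2 ∈ Set.Ico (0 : ℝ) vbar := ⟨le_of_lt h2.1, lt_trans h2.2 hqv⟩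
    have s1 : 0 < 1 - F p1 := hsurv_pos p1 m1
    have s2 : 0 < 1 - F p2 := hsurv_pos p2 m2
    have fp1 : 0 < f p1 := hf_pos p1 ⟨m1.1, le_of_lt m1.2⟩
    have hFlt : F p1 < F p2 := hFmono ⟨m1.1, le_of_lt m1.2⟩ ⟨m2.1, le_of_lt m2.2⟩ hlt
    -- divide equations by survival
    have d1 : 1 - c / (1 - F p1) = p1 * (f p1 / (1 - F p1)) := by
      field_simp; linarith
    have d2 : 1 - c / (1 - F p2) = p2 * (f p2 / (1 - F p2)) := by
      field_simp; linarith
    have hLHS : 1 - c / (1 - F p2) < 1 - c / (1 - F p1) := by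
      have : c / (1 - F p1) < c / (1 - F p2) :=
        div_lt_div_of_pos_left hc0 s2 (by linarith)
      linarith
    have hmono := hMHR m1 m2 (le_of_lt hlt)
    have hh1 : 0 < f p1 / (1 - F p1) := div_pos fp1 s1
    have hRHS : p1 * (f p1 / (1 - F p1)) < p2 * (f p2 / (1 - F p2)) := by
      calc p1 * (f p1 / (1 - F p1)) < p2 * (f p1 / (1 - F p1)) := by
            exact mul_lt_mul_of_pos_right hlt hh1
        _ ≤ p2 * (f p2 / (1 - F p2)) :=
            mul_le_mul_of_nonneg_left hmono (by linarith [h2.1])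
    rw [d1, d2] at hLHS
    linarith
  intro y hy
  rcases lt_trichotomy y p with h | h | h
  · exact absurd (key y p hy.1 hp hy.2 (by linarith) h) id
  · exact h
  · exact absurd (key p y hp hy.1 (by linarith) hy.2 h) id
end
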